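/- There exists an absolute constant c > 0 such that for every 0 < ε ≤ 1/2 and every 1 ≤ m ≤ n there is a set Λ' ⊂ S^{n-1} which is an ε-cover of U_m with respect to the Euclidean metric and has cardinality |Λ'| ≤ exp(c m log(c n/(m ε))). -/

import Mathlib

open Metric Set

/-- `U_m`: unit vectors of `ℝⁿ` with at most `m` nonzero coordinates. -/
def sparseSphere (n m : ℕ) : Set (EuclideanSpace ℝ (Fin n)) :=
  {x | ‖x‖ = 1 ∧ {i | x i ≠ 0}.ncard ≤ m}

/-!
A maximal `ε`-separated subset of the unit sphere of a `d`-dimensional normed space is an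
`ε`-net, and comparing the volume of the disjoint balls of radius `ε/2` around its points with
that of the ball of radius `1 + ε/2` containing them bounds its size by `(1 + 2/ε)^d`.
`U_m` is the union of the unit spheres of the `C(n, m)` coordinate subspaces spanned by `m`
basis vectors, and `C(n, m) ≤ (e n/m)^m`, so the union of their nets has at most
`(3e n/(m ε))^m ≤ (9n/(m ε))^m` points.
-/

open Module MeasureTheory Real
open scoped NNReal ENNReal Nat

section Packing
variable {E : Type*} [NormedAddCommGroup E] [NormedSpace ℝ E] [FiniteDimensional ℝ E]

theorem Metric.IsSeparated.card_le_of_subset_closedBall {ε : ℝ≥0} (hε : 0 < ε) {x : E}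
    {r : ℝ} (hr : 0 ≤ r) {s : Finset E} (hs : (s : Set E) ⊆ closedBall x r)
    (hsep : IsSeparated ε (s : Set E)) :
    (s.card : ℝ) ≤ (1 + 2 * r / ε) ^ finrank ℝ E := by
  let _ : MeasurableSpace E := borel E
  have : BorelSpace E := ⟨rfl⟩
  set μ : Measure E := Measure.addHaar
  set d := finrank ℝ E
  have hε2 : (0 : ℝ) < ε / 2 := by positivity
  have hdisj : (s : Set E).PairwiseDisjoint fun y => ball y (ε / 2) := by
    intro y hy z hz hyz
    have : (ε : ℝ) < dist y z := by
      simpa [edist_dist, ENNReal.ofReal_lt_ofReal_iff_of_nonneg] using hsep hy hz hyz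
    exact ball_disjoint_ball (by linarith)
  have hsub : (⋃ y ∈ s, ball y (ε / 2)) ⊆ ball x (r + ε / 2) :=
    iUnion₂_subset fun y hy => ball_subset_ball' (by linarith [mem_closedBall.1 (hs hy)])
  have hvol : (s.card : ℝ≥0∞) * (ENNReal.ofReal ((ε / 2) ^ d) * μ (ball 0 1))
      ≤ ENNReal.ofReal ((r + ε / 2) ^ d) * μ (ball 0 1) := by
    calc (s.card : ℝ≥0∞) * (ENNReal.ofReal ((ε / 2) ^ d) * μ (ball 0 1))
        = ∑ y ∈ s, μ (ball y (ε / 2)) := by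
          simp [Measure.addHaar_ball_of_pos μ _ hε2, d]
      _ = μ (⋃ y ∈ s, ball y (ε / 2)) :=
          (measure_biUnion_finset hdisj fun _ _ => measurableSet_ball).symm
      _ ≤ μ (ball x (r + ε / 2)) := measure_mono hsub
      _ = ENNReal.ofReal ((r + ε / 2) ^ d) * μ (ball 0 1) :=
          Measure.addHaar_ball_of_pos μ _ (by positivity)
  rw [← mul_assoc, ENNReal.mul_le_mul_iff_left (measure_ball_pos μ 0 one_pos).ne'
    measure_ball_lt_top.ne, ← ENNReal.ofReal_natCast, ← ENNReal.ofReal_mul (by positivity),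
    ENNReal.ofReal_le_ofReal_iff (by positivity), ← le_div_iff₀ (by positivity), ← div_pow]
    at hvol
  refine hvol.trans_eq (congrArg (· ^ d) ?_)
  field_simp
  ring

theorem Metric.packingNumber_le_of_subset_closedBall {ε : ℝ≥0} (hε : 0 < ε) {x : E} {r : ℝ}
    (hr : 0 ≤ r) {A : Set E} (hA : A ⊆ closedBall x r) :
    packingNumber ε A ≤ ⌊(1 + 2 * r / ε) ^ finrank ℝ E⌋₊ := by
  refine iSup₂_le fun C hCA => iSup_le fun hC => ?_
  by_contra! hlt
  -- `C` may be infinite, but a finite subset of size `⌊…⌋₊ + 1` already violates the volume bound.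
  obtain ⟨D, hDC, hD⟩ := exists_subset_encard_eq (Order.add_one_le_of_lt hlt)
  have hDfin : D.Finite := finite_of_encard_eq_coe hD
  have hcard := IsSeparated.card_le_of_subset_closedBall hε hr (s := hDfin.toFinset)
    (by simpa using hDC.trans (hCA.trans hA)) (by simpa using hC.subset hDC)
  rw [← ncard_eq_toFinset_card D hDfin, ncard_def, hD] at hcard
  exact (Nat.lt_floor_add_one _).not_ge (by exact_mod_cast hcard)

end Packing

theorem Metric.exists_finite_isCover_sphere_inter_submodule {E : Type*}
    [NormedAddCommGroup E] [NormedSpace ℝ E] (V : Submodule ℝ E) [FiniteDimensional ℝ V]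
    {ε : ℝ≥0} (hε : 0 < ε) :
    ∃ C ⊆ sphere (0 : E) 1 ∩ V, C.Finite ∧ IsCover ε (sphere 0 1 ∩ V) C ∧
      (C.ncard : ℝ) ≤ (1 + 2 / (ε : ℝ)) ^ finrank ℝ V := by
  have himage : ((↑) : V → E) '' sphere 0 1 = sphere 0 1 ∩ V := by
    ext x; simp [and_comm]
  have hcov :
      coveringNumber ε (sphere (0 : E) 1 ∩ V) ≤ ⌊(1 + 2 / (ε : ℝ)) ^ finrank ℝ V⌋₊ := by
    rw [← himage, isometry_subtype_coe.coveringNumber_image]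
    simpa using (coveringNumber_le_packingNumber _ _).trans
      (packingNumber_le_of_subset_closedBall hε zero_le_one sphere_subset_closedBall)
  obtain ⟨C, hCA, hCfin, hCcov, hCcard⟩ :=
    exists_set_encard_eq_coveringNumber (ne_top_of_le_ne_top (ENat.natCast_ne_top _) hcov)
  refine ⟨C, hCA, hCfin, hCcov, ?_⟩
  rw [← hCcard, encard_le_coe_iff_finite_ncard_le] at hcov
  exact (Nat.cast_le.2 hcov.2).trans (Nat.floor_le (by positivity))

section CoordSubspace
variable {ι : Type*} [DecidableEq ι]

def coordSubspace (S : Finset ι) : Submodule ℝ (EuclideanSpace ℝ ι) :=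
  Submodule.span ℝ (range fun i : S => EuclideanSpace.single (i : ι) (1 : ℝ))

theorem finrank_coordSubspace_le (S : Finset ι) : finrank ℝ (coordSubspace S) ≤ S.card :=
  (finrank_range_le_card _).trans_eq (Fintype.card_coe S)

theorem mem_coordSubspace [Fintype ι] {S : Finset ι} {x : EuclideanSpace ℝ ι}
    (hx : ∀ i ∉ S, x i = 0) : x ∈ coordSubspace S := by
  rw [← (EuclideanSpace.basisFun ι ℝ).sum_repr x]
  refine sum_mem fun i _ => ?_
  by_cases hi : i ∈ S
  · exact Submodule.smul_mem _ _ (Submodule.subset_span ⟨⟨i, hi⟩, by simp⟩)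
  · simp [hx i hi]

end CoordSubspace

theorem sparseSphere_subset_biUnion_coordSubspace {n m : ℕ} (hmn : m ≤ n) :
    sparseSphere n m ⊆
      ⋃ S ∈ Finset.powersetCard m (Finset.univ : Finset (Fin n)),
        sphere 0 1 ∩ (coordSubspace S : Set _) := by
  rintro x ⟨hx1, hxm⟩
  classical
  have hsupp : (Finset.univ.filter fun i => x i ≠ 0).card ≤ m := by
    rwa [← ncard_coe_finset, Finset.coe_filter_univ]
  obtain ⟨S, hsuppS, hS⟩ := Finset.exists_superset_card_eq hsupp (by simpa using hmn)
  refine mem_biUnion (Finset.mem_powersetCard_univ.2 hS)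
    ⟨mem_sphere_zero_iff_norm.2 hx1, mem_coordSubspace fun i hi => ?_⟩
  by_contra hxi
  exact hi (hsuppS (by simpa using hxi))

theorem Nat.choose_le_exp_one_mul_div_pow (n m : ℕ) :
    (n.choose m : ℝ) ≤ (exp 1 * n / m) ^ m := by
  rcases m.eq_zero_or_pos with rfl | hm
  · simp
  calc (n.choose m : ℝ) ≤ n ^ m / m ! := Nat.choose_le_pow_div m n
    _ = (n / m) ^ m * (m ^ m / m !) := by rw [div_pow]; field_simp
    _ ≤ (n / m) ^ m * exp m := by gcongr; exact pow_div_factorial_le_exp _ m.cast_nonneg m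
    _ = (exp 1 * n / m) ^ m := by rw [← exp_one_pow]; ring

theorem choose_mul_pow_le_exp {n m : ℕ} {ε : ℝ} (hε : 0 < ε) (hε1 : ε ≤ 1) (hm : 1 ≤ m)
    (hmn : m ≤ n) :
    (n.choose m : ℝ) * (1 + 2 / ε) ^ m ≤ exp (9 * m * log (9 * n / (m * ε))) := by
  have hm0 : (0 : ℝ) < m := by exact_mod_cast hm
  have hmn' : (m : ℝ) ≤ n := by exact_mod_cast hmn
  have hq : 1 ≤ 9 * n / (m * ε) := by
    rw [one_le_div (by positivity)]
    nlinarith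
  calc (n.choose m : ℝ) * (1 + 2 / ε) ^ m ≤ (exp 1 * n / m) ^ m * (3 / ε) ^ m := by
        gcongr
        · exact Nat.choose_le_exp_one_mul_div_pow n m
        · rw [le_div_iff₀ hε, add_mul, div_mul_cancel₀ _ hε.ne']
          linarith
    _ = (exp 1 * 3 * (n / (m * ε))) ^ m := by rw [← mul_pow]; field_simp
    _ ≤ (9 * n / (m * ε)) ^ m := by
        rw [mul_div_assoc]
        gcongr
        linarith [exp_one_lt_d9]
    _ = exp (m * log (9 * n / (m * ε))) := by
        rw [exp_nat_mul, exp_log (by linarith)]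
    _ ≤ exp (9 * m * log (9 * n / (m * ε))) :=
        exp_le_exp.2 (by nlinarith [log_nonneg hq])

/-- Lemma `cover`, "moreover" part: there is an absolute constant `c > 0` such
that for every `0 < ε ≤ 1/2` and `1 ≤ m ≤ n` there is an `ε`-cover `Λ' ⊆ S^{n-1}` of `U_m`
with `|Λ'| ≤ exp(c m log(c n/(m ε)))`. -/
theorem stmt5 :
    ∃ c : ℝ, 0 < c ∧
      ∀ (n m : ℕ) (ε : ℝ), 0 < ε → ε ≤ 1 / 2 → 1 ≤ m → m ≤ n →
      ∃ Λ' : Set (EuclideanSpace ℝ (Fin n)),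
        Λ' ⊆ sphere 0 1 ∧
        (∀ x ∈ sparseSphere n m, ∃ y ∈ Λ', dist x y ≤ ε) ∧
        Λ'.Finite ∧ (Λ'.ncard : ℝ) ≤ Real.exp (c * m * Real.log (c * n / (m * ε))) := by
  refine ⟨9, by norm_num, fun n m ε hε hε2 hm hmn => ?_⟩
  lift ε to ℝ≥0 using hε.le
  choose C hC_sub hC_fin hC_cover hC_card using fun S : Finset (Fin n) =>
    exists_finite_isCover_sphere_inter_submodule (coordSubspace S) (NNReal.coe_pos.1 hε)
  set 𝒮 := Finset.powersetCard m (Finset.univ : Finset (Fin n))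
  refine ⟨⋃ S ∈ 𝒮, C S, iUnion₂_subset fun S _ x hx => (hC_sub S hx).1, ?_,
    𝒮.finite_toSet.biUnion fun S _ => hC_fin S, ?_⟩
  · intro x hx
    obtain ⟨S, hS, hxS⟩ := mem_iUnion₂.1 (sparseSphere_subset_biUnion_coordSubspace hmn hx)
    obtain ⟨y, hy, hxy⟩ := hC_cover S hxS
    refine ⟨y, mem_iUnion₂.2 ⟨S, hS, hy⟩, ?_⟩
    rw [← coe_nndist]
    exact NNReal.coe_le_coe.2 (edist_le_coe.1 hxy)
  · calc ((⋃ S ∈ 𝒮, C S).ncard : ℝ) ≤ ∑ S ∈ 𝒮, ((C S).ncard : ℝ) := by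
          exact_mod_cast 𝒮.set_ncard_biUnion_le C
      _ ≤ ∑ S ∈ 𝒮, (1 + 2 / (ε : ℝ)) ^ m := by
          refine Finset.sum_le_sum fun S hS => (hC_card S).trans ?_
          refine pow_le_pow_right₀ (le_add_of_nonneg_right (by positivity)) ?_
          exact (finrank_coordSubspace_le S).trans_eq (Finset.mem_powersetCard_univ.1 hS)
      _ = n.choose m * (1 + 2 / (ε : ℝ)) ^ m := by simp [𝒮]
      _ ≤ exp (9 * m * log (9 * n / (m * ε))) := choose_mul_pow_le_exp hε (by linarith) hm hmn
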